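/- Monotonicity of the entanglement of purification under local measurement: let ρ be a density matrix on H_A ⊗ H_B and let {A_i} be a finite family of operators on H_A with Σ_i A_i† A_i = I (a measurement by Alice). Set p_i = Tr((A_i ⊗ I)ρ(A_i† ⊗ I)) and, for p_i > 0, ρ_i = (A_i ⊗ I)ρ(A_i† ⊗ I)/p_i. Then Σ_i p_i E_p(ρ_i) ≤ E_p(ρ). -/

import Mathlib

noncomputable section
open scoped BigOperators Kronecker Matrix ComplexOrder
open Matrix

namespace QIT

def IsDensity {n : Type*} [Fintype n] [DecidableEq n] (ρ : Matrix n n ℂ) : Prop :=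
  ρ.PosSemidef ∧ ρ.trace = 1

noncomputable def vN {n : Type*} [Fintype n] [DecidableEq n] (ρ : Matrix n n ℂ) : ℝ :=
  if h : ρ.IsHermitian then ∑ i, -(h.eigenvalues i * Real.logb 2 (h.eigenvalues i)) else 0

def proj {n : Type*} (ψ : n → ℂ) : Matrix n n ℂ :=
  Matrix.of fun x y => ψ x * (starRingEnd ℂ) (ψ y)

def ptraceL {a b : Type*} [Fintype a] (ρ : Matrix (a × b) (a × b) ℂ) : Matrix b b ℂ :=
  Matrix.of fun i j => ∑ k, ρ (k, i) (k, j)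

def ptraceR {a b : Type*} [Fintype b] (ρ : Matrix (a × b) (a × b) ℂ) : Matrix a a ℂ :=
  Matrix.of fun i j => ∑ k, ρ (i, k) (j, k)

noncomputable def ent {X Y : Type*} [Fintype X] [Fintype Y] [DecidableEq Y]
    (ψ : X × Y → ℂ) : ℝ :=
  vN (ptraceL (proj ψ))

def IsPurification {A B : Type*} [Fintype A] [Fintype B] {dA' dB' : ℕ}
    (ρ : Matrix (A × B) (A × B) ℂ)
    (ψ : (A × Fin dA') × (B × Fin dB') → ℂ) : Prop :=
  (∑ x, ‖ψ x‖ ^ 2 = 1) ∧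
  ∀ a b a' b', ρ (a, b) (a', b') =
    ∑ a2 : Fin dA', ∑ b2 : Fin dB',
      ψ ((a, a2), (b, b2)) * (starRingEnd ℂ) (ψ ((a', a2), (b', b2)))

noncomputable def Ep {A B : Type*} [Fintype A] [Fintype B] [DecidableEq A] [DecidableEq B]
    (ρ : Matrix (A × B) (A × B) ℂ) : ℝ :=
  sInf { e : ℝ | ∃ (dA' dB' : ℕ) (ψ : (A × Fin dA') × (B × Fin dB') → ℂ),
    IsPurification ρ ψ ∧ e = ent ψ }

noncomputable def Iq {A B : Type*} [Fintype A] [Fintype B] [DecidableEq A] [DecidableEq B]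
    (ρ : Matrix (A × B) (A × B) ℂ) : ℝ :=
  vN (ptraceR ρ) + vN (ptraceL ρ) - vN ρ

open Classical in
noncomputable def msqrt {n : Type*} [Fintype n] [DecidableEq n] (M : Matrix n n ℂ) : Matrix n n ℂ :=
  if h : M.PosSemidef then
    (h.1.eigenvectorUnitary : Matrix n n ℂ) * diagonal ((↑) ∘ Real.sqrt ∘ h.1.eigenvalues) *
      (star h.1.eigenvectorUnitary : Matrix n n ℂ) else 0

noncomputable def fid {n : Type*} [Fintype n] [DecidableEq n] (ρ σ : Matrix n n ℂ) : ℝ :=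
  ((msqrt (msqrt ρ * σ * msqrt ρ)).trace).re

noncomputable def bures {n : Type*} [Fintype n] [DecidableEq n] (ρ σ : Matrix n n ℂ) : ℝ :=
  2 * Real.sqrt (1 - fid ρ σ)

noncomputable def traceNorm {n : Type*} [Fintype n] [DecidableEq n] (X : Matrix n n ℂ) : ℝ :=
  ((msqrt (Xᴴ * X)).trace).re

def IsPOVM {n : Type*} [Fintype n] [DecidableEq n] {k : ℕ} (M : Fin k → Matrix n n ℂ) : Prop :=
  (∀ i, (M i).PosSemidef) ∧ ∑ i, M i = 1

noncomputable def shannon {k : Type*} [Fintype k] (p : k → ℝ) : ℝ :=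
  ∑ i, -(p i * Real.logb 2 (p i))

noncomputable def miJoint {k l : Type*} [Fintype k] [Fintype l] (p : k × l → ℝ) : ℝ :=
  shannon (fun i => ∑ j, p (i, j)) + shannon (fun j => ∑ i, p (i, j)) - shannon p

noncomputable def Ic {A B : Type*} [Fintype A] [Fintype B] [DecidableEq A] [DecidableEq B]
    (ρ : Matrix (A × B) (A × B) ℂ) : ℝ :=
  sSup { e : ℝ | ∃ (k l : ℕ) (MA : Fin k → Matrix A A ℂ) (MB : Fin l → Matrix B B ℂ),
    IsPOVM MA ∧ IsPOVM MB ∧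
    e = miJoint (fun ij : Fin k × Fin l => (((MA ij.1 ⊗ₖ MB ij.2) * ρ).trace).re) }

noncomputable def probOf {A B : Type*} [Fintype A] [Fintype B] [DecidableEq A] [DecidableEq B]
    (M : Matrix A A ℂ) (ρ : Matrix (A × B) (A × B) ℂ) : ℝ :=
  (((M ⊗ₖ (1 : Matrix B B ℂ)) * ρ).trace).re

noncomputable def postB {A B : Type*} [Fintype A] [Fintype B] [DecidableEq A] [DecidableEq B]
    (M : Matrix A A ℂ) (ρ : Matrix (A × B) (A × B) ℂ) : Matrix B B ℂ :=
  ((probOf M ρ : ℂ))⁻¹ • ptraceL ((M ⊗ₖ (1 : Matrix B B ℂ)) * ρ)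

noncomputable def CA {A B : Type*} [Fintype A] [Fintype B] [DecidableEq A] [DecidableEq B]
    (ρ : Matrix (A × B) (A × B) ℂ) : ℝ :=
  sSup { c : ℝ | ∃ (k : ℕ) (M : Fin k → Matrix A A ℂ), IsPOVM M ∧
    c = vN (∑ i, (probOf (M i) ρ : ℂ) • postB (M i) ρ)
        - ∑ i, probOf (M i) ρ * vN (postB (M i) ρ) }

noncomputable def pauli : Fin 4 → Matrix (Fin 2) (Fin 2) ℂ :=
  ![1, !![0, 1; 1, 0], !![0, -Complex.I; Complex.I, 0], !![1, 0; 0, -1]]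

noncomputable def bell0 : Fin 2 × Fin 2 → ℂ :=
  fun x => if x.1 = x.2 then ((Real.sqrt 2)⁻¹ : ℝ) else 0

noncomputable def bell (i : Fin 4) : Fin 2 × Fin 2 → ℂ :=
  fun x => ∑ j, pauli i x.2 j * bell0 (x.1, j)

noncomputable def binEnt (x : ℝ) : ℝ :=
  -(x * Real.logb 2 x) - (1 - x) * Real.logb 2 (1 - x)

noncomputable def pauliChannel (p : Fin 4 → ℝ) (X : Matrix (Fin 2) (Fin 2) ℂ) :
    Matrix (Fin 2) (Fin 2) ℂ :=
  ∑ i, (p i : ℂ) • (pauli i * X * pauli i)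

noncomputable def holevoCap (Λ : Matrix (Fin 2) (Fin 2) ℂ → Matrix (Fin 2) (Fin 2) ℂ) : ℝ :=
  sSup { c : ℝ | ∃ (k : ℕ) (q : Fin k → ℝ) (ρs : Fin k → Matrix (Fin 2) (Fin 2) ℂ),
    (∀ i, 0 ≤ q i) ∧ (∑ i, q i = 1) ∧ (∀ i, IsDensity (ρs i)) ∧
    c = vN (∑ i, (q i : ℂ) • Λ (ρs i)) - ∑ i, q i * vN (Λ (ρs i)) }

def tensPow {A B : Type*} [Fintype A] [Fintype B]
    (ρ : Matrix (A × B) (A × B) ℂ) (n : ℕ) :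
    Matrix ((Fin n → A) × (Fin n → B)) ((Fin n → A) × (Fin n → B)) ℂ :=
  Matrix.of fun x y => ∏ t, ρ (x.1 t, x.2 t) (y.1 t, y.2 t)

noncomputable def measOut {dA dB : ℕ} (M : Matrix (Fin dA) (Fin dA) ℂ)
    (ρ : Matrix (Fin dA × Fin dB) (Fin dA × Fin dB) ℂ) :
    Matrix (Fin dA × Fin dB) (Fin dA × Fin dB) ℂ :=
  (M ⊗ₖ (1 : Matrix (Fin dB) (Fin dB) ℂ)) * ρ * (M ⊗ₖ (1 : Matrix (Fin dB) (Fin dB) ℂ))ᴴ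

/-!
Let `ψ` be any purification of `ρ`. After Alice applies `Aᵢ` to her half, `(Aᵢ ⊗ I)ψ / √pᵢ`
purifies the post-measurement state `ρᵢ`, and since `∑ Aᵢ† Aᵢ = I` the reduced states `σᵢ` of
these vectors on Bob's side `B B'` average to the reduced state of `ψ`. Hence
`∑ pᵢ E_p(ρᵢ) ≤ ∑ pᵢ S(σᵢ) ≤ S(∑ pᵢ σᵢ) = E(ψ)` by concavity of the von Neumann entropy, and
the infimum over `ψ` gives the claim.
-/

open Finset

section Entropy

variable {n : Type*} [Fintype n] [DecidableEq n]

lemma vN_of_isHermitian {ρ : Matrix n n ℂ} (hρ : ρ.IsHermitian) :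
    vN ρ = ∑ i, -(hρ.eigenvalues i * Real.logb 2 (hρ.eigenvalues i)) :=
  dif_pos hρ

lemma concaveOn_neg_mul_logb_two :
    ConcaveOn ℝ (Set.Ici 0) fun x : ℝ => -(x * Real.logb 2 x) := by
  have h : (fun x : ℝ => -(x * Real.logb 2 x)) = fun x => (Real.log 2)⁻¹ • Real.negMulLog x := by
    ext x
    simp only [Real.negMulLog, Real.logb, smul_eq_mul]
    ring
  exact h ▸ Real.concaveOn_negMulLog.smul (inv_nonneg.2 (Real.log_pos one_lt_two).le)

lemma vN_nonneg {ρ : Matrix n n ℂ} (hρ : IsDensity ρ) : 0 ≤ vN ρ := by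
  obtain ⟨hpos, htr⟩ := hρ
  have hsum : ∑ i, hpos.1.eigenvalues i = 1 := by
    have h := congrArg Complex.re hpos.1.trace_eq_sum_eigenvalues
    simpa [htr] using h.symm
  rw [vN_of_isHermitian hpos.1]
  refine sum_nonneg fun i _ => ?_
  have h0 := hpos.eigenvalues_nonneg i
  have h1 : hpos.1.eigenvalues i ≤ 1 :=
    hsum ▸ single_le_sum (fun j _ => hpos.eigenvalues_nonneg j) (mem_univ i)
  exact neg_nonneg.2 (mul_nonpos_of_nonneg_of_nonpos h0 (Real.logb_nonpos one_lt_two h0 h1))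

lemma sum_normSq_col_eq_one (W : unitaryGroup n ℂ) (k : n) :
    ∑ j, Complex.normSq (W j k) = 1 := by
  have h := congr_fun (congr_fun (UnitaryGroup.star_mul_self W) k) k
  simp only [mul_apply, star_apply, one_apply_eq, RCLike.star_def,
    ← Complex.normSq_eq_conj_mul_self] at h
  exact_mod_cast h

lemma sum_normSq_row_eq_one (W : unitaryGroup n ℂ) (j : n) :
    ∑ k, Complex.normSq (W j k) = 1 := by
  simpa using sum_normSq_col_eq_one (star W) j

/-- The diagonal of `A` in any orthonormal basis is a doubly stochastic average of its
eigenvalues. -/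
lemma sum_eigenvalues_le_sum_diag {h : ℝ → ℝ} (hh : ConcaveOn ℝ (Set.Ici 0) h)
    {A : Matrix n n ℂ} (hA : A.PosSemidef) (V : unitaryGroup n ℂ) :
    ∑ j, h (hA.1.eigenvalues j) ≤ ∑ k, h ((star (V : Matrix n n ℂ) * A * V) k k).re := by
  set W : unitaryGroup n ℂ := star hA.1.eigenvectorUnitary * V
  have hdiag : ∀ k, ((star (V : Matrix n n ℂ) * A * V) k k).re
      = ∑ j, Complex.normSq (W j k) • hA.1.eigenvalues j := by
    intro k
    have hA' : star (V : Matrix n n ℂ) * A * (V : Matrix n n ℂ) = star (W : Matrix n n ℂ) *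
        diagonal (RCLike.ofReal ∘ hA.1.eigenvalues) * (W : Matrix n n ℂ) := by
      conv_lhs => rw [hA.1.spectral_theorem, Unitary.conjStarAlgAut_apply]
      simp only [W, Submonoid.coe_mul, Unitary.coe_star, star_mul, star_star, Matrix.mul_assoc]
    rw [hA', mul_apply, Complex.re_sum]
    refine sum_congr rfl fun j _ => ?_
    simp only [mul_diagonal, star_apply, RCLike.star_def, Function.comp_apply,
      mul_right_comm _ _ (W j k : ℂ), ← Complex.normSq_eq_conj_mul_self, smul_eq_mul]
    exact Complex.re_ofReal_mul _ _
  calc ∑ j, h (hA.1.eigenvalues j)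
      = ∑ k, ∑ j, Complex.normSq (W j k) • h (hA.1.eigenvalues j) := by
        rw [sum_comm]
        simp only [← sum_smul, sum_normSq_row_eq_one, one_smul]
    _ ≤ ∑ k, h (∑ j, Complex.normSq (W j k) • hA.1.eigenvalues j) :=
        sum_le_sum fun k _ => hh.le_map_sum (fun j _ => Complex.normSq_nonneg _)
          (sum_normSq_col_eq_one W k) fun j _ => hA.eigenvalues_nonneg j
    _ = _ := by simp only [hdiag]

lemma sum_mul_vN_le_vN_sum {ι : Type*} [Fintype ι] (p : ι → ℝ) (σ : ι → Matrix n n ℂ)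
    (hp : ∀ i, 0 ≤ p i) (hp1 : ∑ i, p i = 1) (hσ : ∀ i, (σ i).PosSemidef) :
    ∑ i, p i * vN (σ i) ≤ vN (∑ i, (p i : ℂ) • σ i) := by
  have hmix : (∑ i, (p i : ℂ) • σ i).PosSemidef :=
    posSemidef_sum _ fun i _ => (hσ i).smul (Complex.zero_le_real.2 (hp i))
  set V := hmix.1.eigenvectorUnitary
  set d : ι → n → ℝ := fun i k => ((star (V : Matrix n n ℂ) * σ i * V) k k).re
  have hd : ∀ i k, 0 ≤ d i k := fun i k => by
    have := ((hσ i).conjTranspose_mul_mul_same (V : Matrix n n ℂ)).diag_nonneg (i := k)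
    rw [← star_eq_conjTranspose] at this
    exact (Complex.nonneg_iff.1 this).1
  have hμ : ∀ k, hmix.1.eigenvalues k = ∑ i, p i • d i k := by
    intro k
    have h := congr_fun (congr_fun hmix.1.conjStarAlgAut_star_eigenvectorUnitary k) k
    rw [Unitary.conjStarAlgAut_star_apply, Matrix.mul_sum, Matrix.sum_mul] at h
    simp only [diagonal_apply_eq, Function.comp_apply, Matrix.mul_smul, Matrix.smul_mul,
      Matrix.sum_apply, Matrix.smul_apply, smul_eq_mul] at h
    simp only [d, smul_eq_mul, ← Complex.re_ofReal_mul, ← Complex.re_sum]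
    rw [h]
    rfl
  calc ∑ i, p i * vN (σ i)
      ≤ ∑ i, p i * ∑ k, -(d i k * Real.logb 2 (d i k)) :=
        sum_le_sum fun i _ => mul_le_mul_of_nonneg_left (by
          rw [vN_of_isHermitian (hσ i).1]
          exact sum_eigenvalues_le_sum_diag concaveOn_neg_mul_logb_two (hσ i) V) (hp i)
    _ = ∑ k, ∑ i, p i • -(d i k * Real.logb 2 (d i k)) := by
        simp only [mul_sum, smul_eq_mul]
        exact sum_comm
    _ ≤ ∑ k, -((∑ i, p i • d i k) * Real.logb 2 (∑ i, p i • d i k)) :=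
        sum_le_sum fun k _ => concaveOn_neg_mul_logb_two.le_map_sum (fun i _ => hp i) hp1
          fun i _ => hd i k
    _ = vN (∑ i, (p i : ℂ) • σ i) := by
        simp only [vN_of_isHermitian hmix.1, hμ]

end Entropy

section ReducedState

lemma trace_mul_conjTranspose_self {m l : Type*} [Fintype m] [Fintype l]
    (X : Matrix m l ℂ) : (X * Xᴴ).trace = ((∑ i, ∑ j, ‖X i j‖ ^ 2 : ℝ) : ℂ) := by
  simp only [trace, Matrix.diag, mul_apply, conjTranspose_apply, RCLike.star_def, Complex.mul_conj',
    Complex.ofReal_sum, Complex.ofReal_pow]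

variable {X Y : Type*} [Fintype X]

def coeffMatrix (ψ : X × Y → ℂ) : Matrix X Y ℂ :=
  Matrix.of fun x y => ψ (x, y)

lemma ptraceL_proj_eq (ψ : X × Y → ℂ) :
    ptraceL (proj ψ) = ((coeffMatrix ψ)ᴴ * coeffMatrix ψ)ᵀ := by
  ext y y'
  simp only [ptraceL, proj, coeffMatrix, transpose_apply, mul_apply, conjTranspose_apply,
    of_apply, RCLike.star_def, mul_comm]

lemma posSemidef_ptraceL_proj [Fintype Y] (ψ : X × Y → ℂ) : (ptraceL (proj ψ)).PosSemidef :=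
  ptraceL_proj_eq ψ ▸ (posSemidef_conjTranspose_mul_self _).transpose

lemma trace_ptraceL_proj [Fintype Y] (ψ : X × Y → ℂ) :
    (ptraceL (proj ψ)).trace = ((∑ x, ‖ψ x‖ ^ 2 : ℝ) : ℂ) := by
  rw [ptraceL_proj_eq, trace_transpose, trace_mul_comm, trace_mul_conjTranspose_self,
    Fintype.sum_prod_type]
  rfl

lemma ptraceL_proj_smul (c : ℂ) (ψ : X × Y → ℂ) :
    ptraceL (proj (c • ψ)) = (c * star c) • ptraceL (proj ψ) := by
  simp only [ptraceL_proj_eq, show coeffMatrix (c • ψ) = c • coeffMatrix ψ from rfl,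
    conjTranspose_smul, Matrix.smul_mul, Matrix.mul_smul, smul_smul, transpose_smul]

lemma isDensity_ptraceL_proj [Fintype Y] [DecidableEq Y] {ψ : X × Y → ℂ} (hψ : ∑ x, ‖ψ x‖ ^ 2 = 1) :
    IsDensity (ptraceL (proj ψ)) :=
  ⟨posSemidef_ptraceL_proj ψ, by rw [trace_ptraceL_proj, hψ, Complex.ofReal_one]⟩

lemma ent_nonneg [Fintype Y] [DecidableEq Y] {ψ : X × Y → ℂ} (hψ : ∑ x, ‖ψ x‖ ^ 2 = 1) :
    0 ≤ ent ψ :=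
  vN_nonneg (isDensity_ptraceL_proj hψ)

end ReducedState

section Ancilla

variable {A A' B B' : Type*} [Fintype A] [Fintype A'] [Fintype B] [Fintype B']

def sysCoeffMatrix (ψ : (A × A') × (B × B') → ℂ) : Matrix (A × B) (A' × B') ℂ :=
  Matrix.of fun x y => ψ ((x.1, y.1), (x.2, y.2))

lemma trace_sysCoeffMatrix_mul_conjTranspose (ψ : (A × A') × (B × B') → ℂ) :
    (sysCoeffMatrix ψ * (sysCoeffMatrix ψ)ᴴ).trace = ((∑ x, ‖ψ x‖ ^ 2 : ℝ) : ℂ) := by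
  rw [trace_mul_conjTranspose_self, ← Fintype.sum_prod_type',
    ← Equiv.sum_comp (Equiv.prodProdProdComm A B A' B')]
  rfl

lemma isPurification_iff {dA' dB' : ℕ} {ρ : Matrix (A × B) (A × B) ℂ}
    {ψ : (A × Fin dA') × (B × Fin dB') → ℂ} :
    IsPurification ρ ψ ↔ ρ.trace = 1 ∧ ρ = sysCoeffMatrix ψ * (sysCoeffMatrix ψ)ᴴ := by
  have hentries : ∀ a b a' b', (sysCoeffMatrix ψ * (sysCoeffMatrix ψ)ᴴ) (a, b) (a', b') =
      ∑ a2, ∑ b2, ψ ((a, a2), (b, b2)) * (starRingEnd ℂ) (ψ ((a', a2), (b', b2))) := by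
    intro a b a' b'
    simp only [mul_apply, Fintype.sum_prod_type, sysCoeffMatrix, conjTranspose_apply, of_apply,
      RCLike.star_def]
  have hext : ρ = sysCoeffMatrix ψ * (sysCoeffMatrix ψ)ᴴ ↔ ∀ a b a' b', ρ (a, b) (a', b') =
      ∑ a2, ∑ b2, ψ ((a, a2), (b, b2)) * (starRingEnd ℂ) (ψ ((a', a2), (b', b2))) := by
    simp only [← hentries, ← Matrix.ext_iff, Prod.forall]
  rw [IsPurification, ← hext]
  constructor
  · rintro ⟨hnorm, rfl⟩
    exact ⟨by rw [trace_sysCoeffMatrix_mul_conjTranspose, hnorm, Complex.ofReal_one], rfl⟩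
  · rintro ⟨htr, rfl⟩
    exact ⟨by exact_mod_cast (trace_sysCoeffMatrix_mul_conjTranspose ψ).symm.trans htr, rfl⟩

variable [DecidableEq A] [DecidableEq B]

lemma Ep_le_ent {dA' dB' : ℕ} {ρ : Matrix (A × B) (A × B) ℂ}
    {ψ : (A × Fin dA') × (B × Fin dB') → ℂ} (hψ : IsPurification ρ ψ) : Ep ρ ≤ ent ψ :=
  csInf_le ⟨0, by rintro _ ⟨_, _, ψ', hψ', rfl⟩; exact ent_nonneg hψ'.1⟩ ⟨_, _, ψ, hψ, rfl⟩

open scoped MatrixOrder in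
lemma exists_isPurification {ρ : Matrix (A × B) (A × B) ℂ} (hρ : IsDensity ρ) :
    ∃ ψ : (A × Fin (Fintype.card (A × B))) × (B × Fin 1) → ℂ, IsPurification ρ ψ := by
  obtain ⟨S, rfl⟩ : ∃ S : Matrix (A × B) (A × B) ℂ, ρ = S * Sᴴ := by
    obtain ⟨T, hT⟩ := CStarAlgebra.nonneg_iff_eq_star_mul_self.mp hρ.1.nonneg
    exact ⟨Tᴴ, by rw [hT, conjTranspose_conjTranspose, star_eq_conjTranspose]⟩
  let e : Fin (Fintype.card (A × B)) × Fin 1 ≃ A × B :=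
    (Equiv.prodUnique _ _).trans (Fintype.equivFin _).symm
  refine ⟨fun x => S (x.1.1, x.2.1) (e (x.1.2, x.2.2)), isPurification_iff.2 ⟨hρ.2, ?_⟩⟩
  change _ = S.submatrix id e * (S.submatrix id e)ᴴ
  rw [conjTranspose_submatrix, submatrix_mul_equiv, submatrix_id_id]

lemma Ep_inv_smul_le {dA' dB' : ℕ} {χ : (A × Fin dA') × (B × Fin dB') → ℂ}
    (hχ : ∑ x, ‖χ x‖ ^ 2 ≠ 0) :
    Ep (((∑ x, ‖χ x‖ ^ 2 : ℝ) : ℂ)⁻¹ • (sysCoeffMatrix χ * (sysCoeffMatrix χ)ᴴ)) ≤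
      vN (((∑ x, ‖χ x‖ ^ 2 : ℝ) : ℂ)⁻¹ • ptraceL (proj χ)) := by
  set p := ∑ x, ‖χ x‖ ^ 2
  set c : ℂ := ((Real.sqrt p : ℝ) : ℂ)⁻¹
  have hc : c * star c = (p : ℂ)⁻¹ := by
    rw [star_inv₀, Complex.star_def, Complex.conj_ofReal, ← mul_inv, ← Complex.ofReal_mul,
      Real.mul_self_sqrt (sum_nonneg fun x _ => sq_nonneg _)]
  have hpur : IsPurification ((p : ℂ)⁻¹ • (sysCoeffMatrix χ * (sysCoeffMatrix χ)ᴴ)) (c • χ) := by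
    refine isPurification_iff.2 ⟨?_, ?_⟩
    · rw [trace_smul, trace_sysCoeffMatrix_mul_conjTranspose, smul_eq_mul,
        inv_mul_cancel₀ (Complex.ofReal_ne_zero.2 hχ)]
    · rw [show sysCoeffMatrix (c • χ) = c • sysCoeffMatrix χ from rfl, conjTranspose_smul,
        Matrix.smul_mul, Matrix.mul_smul, smul_smul, hc]
  simpa only [ent, ptraceL_proj_smul, hc] using Ep_le_ent hpur

end Ancilla

section LocalOperation

variable {A A' Y : Type*} [Fintype A]

def actLeft (M : Matrix A A ℂ) (ψ : (A × A') × Y → ℂ) : (A × A') × Y → ℂ :=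
  fun x => ∑ c, M x.1.1 c * ψ ((c, x.1.2), x.2)

lemma coeffMatrix_actLeft [Fintype A'] [DecidableEq A'] (M : Matrix A A ℂ)
    (ψ : (A × A') × Y → ℂ) :
    coeffMatrix (actLeft M ψ) = (M ⊗ₖ (1 : Matrix A' A' ℂ)) * coeffMatrix ψ := by
  ext ⟨a, a2⟩ y
  simp [coeffMatrix, actLeft, mul_apply, Fintype.sum_prod_type, one_apply]

lemma sysCoeffMatrix_actLeft {B B' : Type*} [Fintype A'] [Fintype B] [DecidableEq B]
    (M : Matrix A A ℂ) (ψ : (A × A') × (B × B') → ℂ) :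
    sysCoeffMatrix (actLeft M ψ) = (M ⊗ₖ (1 : Matrix B B ℂ)) * sysCoeffMatrix ψ := by
  ext ⟨a, b⟩ y
  simp [sysCoeffMatrix, actLeft, mul_apply, Fintype.sum_prod_type, one_apply]

lemma sum_ptraceL_proj_actLeft [Fintype A'] [DecidableEq A] [DecidableEq A'] {ι : Type*}
    [Fintype ι] {M : ι → Matrix A A ℂ} (hM : ∑ i, (M i)ᴴ * M i = 1) (ψ : (A × A') × Y → ℂ) :
    ∑ i, ptraceL (proj (actLeft (M i) ψ)) = ptraceL (proj ψ) := by
  have hK : ∑ i, (M i ⊗ₖ (1 : Matrix A' A' ℂ))ᴴ * (M i ⊗ₖ (1 : Matrix A' A' ℂ)) = 1 := calc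
    _ = (∑ i, (M i)ᴴ * M i) ⊗ₖ (1 : Matrix A' A' ℂ) := by
      ext x y
      simp only [conjTranspose_kronecker, conjTranspose_one, ← mul_kronecker_mul, one_mul,
        Matrix.sum_apply, kroneckerMap_apply, sum_mul]
    _ = 1 := by rw [hM, one_kronecker_one]
  have hconj : ∀ K : Matrix (A × A') (A × A') ℂ, (K * coeffMatrix ψ)ᴴ * (K * coeffMatrix ψ)
      = (coeffMatrix ψ)ᴴ * (Kᴴ * K) * coeffMatrix ψ := fun K => by
    simp only [conjTranspose_mul, Matrix.mul_assoc]
  simp only [ptraceL_proj_eq, coeffMatrix_actLeft, ← transpose_sum, hconj, ← Matrix.sum_mul,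
    ← Matrix.mul_sum, hK, Matrix.mul_one]

end LocalOperation

lemma IsPurification.measOut_eq {dA dB dA' dB' : ℕ}
    {ρ : Matrix (Fin dA × Fin dB) (Fin dA × Fin dB) ℂ}
    {ψ : (Fin dA × Fin dA') × (Fin dB × Fin dB') → ℂ} (hψ : IsPurification ρ ψ)
    (M : Matrix (Fin dA) (Fin dA) ℂ) :
    measOut M ρ = sysCoeffMatrix (actLeft M ψ) * (sysCoeffMatrix (actLeft M ψ))ᴴ := by
  rw [measOut, (isPurification_iff.1 hψ).2, sysCoeffMatrix_actLeft, conjTranspose_mul]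
  simp only [Matrix.mul_assoc]

lemma sum_mul_Ep_measOut_le_ent {dA dB k dA' dB' : ℕ}
    {ρ : Matrix (Fin dA × Fin dB) (Fin dA × Fin dB) ℂ}
    {ψ : (Fin dA × Fin dA') × (Fin dB × Fin dB') → ℂ} (hψ : IsPurification ρ ψ)
    {M : Fin k → Matrix (Fin dA) (Fin dA) ℂ} (hM : ∑ i, (M i)ᴴ * M i = 1) :
    ∑ i, ((measOut (M i) ρ).trace).re *
        Ep (((((measOut (M i) ρ).trace).re : ℂ)⁻¹) • measOut (M i) ρ) ≤ ent ψ := by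
  set χ := fun i => actLeft (M i) ψ
  set τ := fun i => ptraceL (proj (χ i))
  set p := fun i => ∑ x, ‖χ i x‖ ^ 2
  have htrace : ∀ i, ((measOut (M i) ρ).trace).re = p i := fun i => by
    rw [hψ.measOut_eq, trace_sysCoeffMatrix_mul_conjTranspose, Complex.ofReal_re]
  simp only [htrace]
  simp only [hψ.measOut_eq]
  have hp0 : ∀ i, 0 ≤ p i := fun i => sum_nonneg fun x _ => sq_nonneg _
  have hsum : ∑ i, τ i = ptraceL (proj ψ) := sum_ptraceL_proj_actLeft hM ψ
  have hp1 : ∑ i, p i = 1 := by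
    have h := congrArg trace hsum
    simp only [trace_sum, τ, trace_ptraceL_proj, hψ.1, ← Complex.ofReal_sum] at h
    exact_mod_cast h
  have hτ : ∀ i, (p i : ℂ) • (p i : ℂ)⁻¹ • τ i = τ i := fun i => by
    rcases eq_or_ne (p i) 0 with h | h
    · have : τ i = 0 := (posSemidef_ptraceL_proj _).trace_eq_zero_iff.1
        (by rw [trace_ptraceL_proj]; exact_mod_cast h)
      rw [this, smul_zero, smul_zero]
    · exact smul_inv_smul₀ (Complex.ofReal_ne_zero.2 h) _
  calc ∑ i, p i * Ep ((p i : ℂ)⁻¹ • (sysCoeffMatrix (χ i) * (sysCoeffMatrix (χ i))ᴴ))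
      ≤ ∑ i, p i * vN ((p i : ℂ)⁻¹ • τ i) := sum_le_sum fun i _ => by
        rcases eq_or_ne (p i) 0 with h | h
        · simp [h]
        · exact mul_le_mul_of_nonneg_left (Ep_inv_smul_le h) (hp0 i)
    _ ≤ vN (∑ i, (p i : ℂ) • (p i : ℂ)⁻¹ • τ i) :=
        sum_mul_vN_le_vN_sum p _ hp0 hp1 fun i => (posSemidef_ptraceL_proj _).smul
          (inv_nonneg.2 (Complex.zero_le_real.2 (hp0 i)))
    _ = ent ψ := by simp only [hτ, hsum, ent]

/-- monotonicity of E_p under a local measurement {Aᵢ} by Alice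
(Σᵢ Aᵢ† Aᵢ = I): with pᵢ = Tr((Aᵢ⊗I)ρ(Aᵢ†⊗I)) and ρᵢ = (Aᵢ⊗I)ρ(Aᵢ†⊗I)/pᵢ, one has
Σᵢ pᵢ E_p(ρᵢ) ≤ E_p(ρ). -/
theorem stmt8 {dA dB k : ℕ}
    (ρ : Matrix (Fin dA × Fin dB) (Fin dA × Fin dB) ℂ) (hρ : IsDensity ρ)
    (M : Fin k → Matrix (Fin dA) (Fin dA) ℂ)
    (hM : ∑ i, (M i)ᴴ * M i = 1) :
    ∑ i, ((measOut (M i) ρ).trace).re *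
        Ep (((((measOut (M i) ρ).trace).re : ℂ)⁻¹) • measOut (M i) ρ) ≤ Ep ρ := by
  obtain ⟨ψ₀, hψ₀⟩ := exists_isPurification hρ
  refine le_csInf ⟨_, _, _, ψ₀, hψ₀, rfl⟩ ?_
  rintro _ ⟨dA', dB', ψ, hψ, rfl⟩
  exact sum_mul_Ep_measOut_le_ent hψ hM

end QIT
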